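/- arXiv:2009.09904 — 5 statements merged into one kernel-verified Lean document; each statement's English description precedes it below -/
import Mathlib

section
/- Let μ, ν, λ ∈ Par_n with N_{μ,ν,λ} > 0, and let 1 ≤ k ≤ i < j ≤ l ≤ n. Set m = min(i−k, l−j) and M = max(i−k, l−j). Then for every 0 ≤ p ≤ m, μ_i − μ_j ≤ λ_k − λ_l + ν_{m−p+1} + ν_{M+p+2} (with ν_r = 0 for r > n). -/
/-- `μ` is a partition with at most `n` parts: a weakly decreasing sequence
`μ 0 ≥ μ 1 ≥ ⋯` of naturals (the paper's part `μ_{i+1}` is `μ i`, i.e. we use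
0-indexing) vanishing from index `n` on. -/
def IsPartitionN (n : ℕ) (μ : ℕ → ℕ) : Prop :=
  Antitone μ ∧ ∀ i, n ≤ i → μ i = 0

/-- The cells `(row, column)` (both 0-indexed) of the skew shape `lam/mu`. -/
def skewCells (lam mu : ℕ → ℕ) : Set (ℕ × ℕ) :=
  {p | mu p.1 ≤ p.2 ∧ p.2 < lam p.1}

/-- `T` is a Littlewood–Richardson skew tableau of shape `lam/mu` and content
`nu`: the shape `mu` is contained in `lam`, rows weakly increase, columns
strictly increase, the (0-indexed) letter `t` occurs `nu t` times, and every
prefix of the reverse reading word (rows read right-to-left, top-to-bottom)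
contains at least as many letters `t` as letters `t+1`. -/
def IsLRTableau (lam mu nu : ℕ → ℕ) (T : ℕ × ℕ → ℕ) : Prop :=
  (∀ i, mu i ≤ lam i) ∧
  (∀ i j j', mu i ≤ j → j ≤ j' → j' < lam i → T (i, j) ≤ T (i, j')) ∧
  (∀ i j, (i, j) ∈ skewCells lam mu → (i + 1, j) ∈ skewCells lam mu →
    T (i, j) < T (i + 1, j)) ∧
  (∀ t, Set.ncard {p ∈ skewCells lam mu | T p = t} = nu t) ∧
  (∀ i j t,
    Set.ncard {p ∈ skewCells lam mu |
        T p = t + 1 ∧ (p.1 < i ∨ (p.1 = i ∧ j ≤ p.2))} ≤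
      Set.ncard {p ∈ skewCells lam mu |
        T p = t ∧ (p.1 < i ∨ (p.1 = i ∧ j ≤ p.2))})

/-- The Littlewood–Richardson coefficient `c^{lam}_{mu,nu}`: the number of
Littlewood–Richardson skew tableaux of shape `lam/mu` and content `nu`
(tableaux are normalized to vanish off the shape). -/
noncomputable def lrCoeff (lam mu nu : ℕ → ℕ) : ℕ :=
  Set.ncard {T : ℕ × ℕ → ℕ | IsLRTableau lam mu nu T ∧
    ∀ p ∉ skewCells lam mu, T p = 0}

/-- The Newell–Littlewood number
`N_{μ,ν,λ} = ∑_{α,β,γ} c^μ_{α,β} c^ν_{α,γ} c^λ_{β,γ}`, realized as the number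
of tuples `((α, β, γ), (T₁, T₂, T₃))` where `α, β, γ` are partitions and
`T₁, T₂, T₃` are Littlewood–Richardson tableaux witnessing the coefficients
`c^μ_{α,β}`, `c^ν_{α,γ}` and `c^λ_{β,γ}` respectively. -/
noncomputable def nlNumber (mu nu lam : ℕ → ℕ) : ℕ :=
  Set.ncard {x : ((ℕ → ℕ) × (ℕ → ℕ) × (ℕ → ℕ)) ×
      ((ℕ × ℕ → ℕ) × (ℕ × ℕ → ℕ) × (ℕ × ℕ → ℕ)) |
    Antitone x.1.1 ∧ Antitone x.1.2.1 ∧ Antitone x.1.2.2 ∧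
    (IsLRTableau mu x.1.1 x.1.2.1 x.2.1 ∧
      ∀ p ∉ skewCells mu x.1.1, x.2.1 p = 0) ∧
    (IsLRTableau nu x.1.1 x.1.2.2 x.2.2.1 ∧
      ∀ p ∉ skewCells nu x.1.1, x.2.2.1 p = 0) ∧
    (IsLRTableau lam x.1.2.1 x.1.2.2 x.2.2.2 ∧
      ∀ p ∉ skewCells lam x.1.2.1, x.2.2.2 p = 0)}

/-- For `I = {i₁ < ⋯ < i_d} ⊆ {0, 1, 2, …}` (the 0-indexed version of the
paper's subsets of positive integers), `tauPartition I` is `τ(I)`, i.e. the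
partition whose (0-indexed) part `t` is `i_{d-t} − (d−t−1) - 1`; for the
paper's 1-indexed sets this is `τ(I) = (i_d − d ≥ ⋯ ≥ i₂ − 2 ≥ i₁ − 1)`. -/
def tauPartition (I : Finset ℕ) : ℕ → ℕ := fun t =>
  if t < I.card then
    (I.sort (· ≤ ·)).getD (I.card - 1 - t) 0 - (I.card - 1 - t)
  else 0


namespace ExtendedWeylAux

/-- The number of cells of the tableau with letter `y` in rows `≤ r`. -/
noncomputable def letterCountLe (lam mu : ℕ → ℕ) (T : ℕ × ℕ → ℕ) (y r : ℕ) : ℕ :=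
  Set.ncard {p ∈ skewCells lam mu | T p = y ∧ p.1 ≤ r}

variable {lam mu nu : ℕ → ℕ} {T : ℕ × ℕ → ℕ} {n : ℕ}

lemma cells_finite (hlam : Antitone lam) (h0 : ∀ r, n ≤ r → lam r = 0) :
    (skewCells lam mu).Finite := by
  apply ((Set.finite_Iio n).prod (Set.finite_Iio (lam 0))).subset
  rintro ⟨r, c⟩ ⟨h1, h2⟩
  constructor
  · by_contra h
    have : lam r = 0 := h0 r (le_of_not_gt h)
    simp only [Set.mem_Iio] at *
    omega
  · exact lt_of_lt_of_le h2 (hlam (Nat.zero_le r))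

lemma colchain (hlam : Antitone lam) (hmu : Antitone mu) (hT : IsLRTableau lam mu nu T) :
    ∀ d r c, (r, c) ∈ skewCells lam mu → (r + d, c) ∈ skewCells lam mu →
      T (r, c) + d ≤ T (r + d, c) := by
  intro d
  induction d with
  | zero => intro r c _ _; simp
  | succ d ih =>
    intro r c h1 h2
    have hmid : (r + d, c) ∈ skewCells lam mu := by
      constructor
      · exact le_trans (hmu (Nat.le_add_right r d)) h1.1
      · exact lt_of_lt_of_le h2.2 (hlam (by omega))
    have hstep := hT.2.2.1 (r + d) c hmid h2
    have := ih r c h1 hmid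
    show T (r, c) + (d + 1) ≤ T (r + d + 1, c)
    omega

lemma letter_le_row (hlam : Antitone lam) (h0 : ∀ r, n ≤ r → lam r = 0)
    (hT : IsLRTableau lam mu nu T) :
    ∀ r c, (r, c) ∈ skewCells lam mu → T (r, c) ≤ r := by
  have hfin : (skewCells lam mu).Finite := cells_finite hlam h0
  intro r
  induction r using Nat.strong_induction_on with
  | _ r ih =>
    intro c hc
    cases h : T (r, c) with
    | zero => omega
    | succ v =>
      have hl := hT.2.2.2.2 r c v
      have hAmem : (r, c) ∈ {p ∈ skewCells lam mu |
          T p = v + 1 ∧ (p.1 < r ∨ (p.1 = r ∧ c ≤ p.2))} :=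
        ⟨hc, h, Or.inr ⟨rfl, le_refl c⟩⟩
      have hAfin : ({p ∈ skewCells lam mu |
          T p = v + 1 ∧ (p.1 < r ∨ (p.1 = r ∧ c ≤ p.2))} : Set (ℕ × ℕ)).Finite :=
        hfin.subset (fun p hp => hp.1)
      have hBfin : ({p ∈ skewCells lam mu |
          T p = v ∧ (p.1 < r ∨ (p.1 = r ∧ c ≤ p.2))} : Set (ℕ × ℕ)).Finite :=
        hfin.subset (fun p hp => hp.1)
      have hpos : 0 < ({p ∈ skewCells lam mu |
          T p = v + 1 ∧ (p.1 < r ∨ (p.1 = r ∧ c ≤ p.2))} : Set (ℕ × ℕ)).ncard :=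
        (Set.ncard_pos hAfin).mpr ⟨_, hAmem⟩
      have hBpos : 0 < ({p ∈ skewCells lam mu |
          T p = v ∧ (p.1 < r ∨ (p.1 = r ∧ c ≤ p.2))} : Set (ℕ × ℕ)).ncard :=
        lt_of_lt_of_le hpos hl
      obtain ⟨q, hqc, hqT, hqreg⟩ := (Set.ncard_pos hBfin).mp hBpos
      rcases hqreg with hlt | ⟨heq, hle⟩
      · have hq : (q.1, q.2) ∈ skewCells lam mu := by
          rw [Prod.mk.eta]; exact hqc
        have := ih q.1 hlt q.2 hq
        rw [Prod.mk.eta] at this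
        omega
      · have hq2 : q.2 < lam r := by
          have := hqc.2; rw [heq] at this; exact this
        have hrow := hT.2.1 r c q.2 hc.1 hle hq2
        have hTq : T (r, q.2) = v := by
          have : (r, q.2) = q := by rw [← heq]
          rw [this]; exact hqT
        omega

lemma snd_injOn (hlam : Antitone lam) (hmu : Antitone mu)
    (hT : IsLRTableau lam mu nu T) (y : ℕ) :
    Set.InjOn Prod.snd {p ∈ skewCells lam mu | T p = y} := by
  have key : ∀ r r' c, r < r' → (r, c) ∈ skewCells lam mu → (r', c) ∈ skewCells lam mu →
      T (r, c) = y → T (r', c) = y → False := by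
    intro r r' c hlt h1 h2 e1 e2
    have h2' : (r + (r' - r), c) ∈ skewCells lam mu := by
      rw [show r + (r' - r) = r' by omega]; exact h2
    have := colchain hlam hmu hT (r' - r) r c h1 h2'
    rw [show r + (r' - r) = r' by omega] at this
    omega
  rintro ⟨r1, c1⟩ ⟨h1, e1⟩ ⟨r2, c2⟩ ⟨h2, e2⟩ hsnd
  simp only at hsnd
  subst hsnd
  rcases lt_trichotomy r1 r2 with h | h | h
  · exact absurd (key r1 r2 c1 h h1 h2 e1 e2) (by simp)
  · rw [h]
  · exact absurd (key r2 r1 c1 h h2 h1 e2 e1) (by simp)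

lemma ncard_le_Ico (hlam : Antitone lam) (hmu : Antitone mu)
    (hT : IsLRTableau lam mu nu T) {s : Set (ℕ × ℕ)} {y lo hi : ℕ}
    (hsub : s ⊆ {p ∈ skewCells lam mu | T p = y})
    (hcol : ∀ p ∈ s, lo ≤ p.2 ∧ p.2 < hi) :
    s.ncard ≤ hi - lo := by
  have hmap : ∀ p ∈ s, Prod.snd p ∈ Set.Ico lo hi := by
    intro p hp
    exact Set.mem_Ico.mpr (hcol p hp)
  have hinj : Set.InjOn Prod.snd s := (snd_injOn hlam hmu hT y).mono hsub
  have hcard := Set.ncard_le_ncard_of_injOn Prod.snd hmap hinj (Set.finite_Ico lo hi)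
  have : (Set.Ico lo hi).ncard = hi - lo := by
    rw [← Finset.coe_Ico, Set.ncard_coe_finset, Nat.card_Ico]
  omega

lemma content_le_outer (hlam : Antitone lam) (hmu : Antitone mu)
    (h0 : ∀ r, n ≤ r → lam r = 0) (hT : IsLRTableau lam mu nu T) (y : ℕ) :
    nu y ≤ lam y := by
  rw [← hT.2.2.2.1 y]
  have := ncard_le_Ico (s := {p ∈ skewCells lam mu | T p = y}) hlam hmu hT
    (le_refl _) (lo := 0) (hi := lam y) ?_
  · omega
  · rintro ⟨r, c⟩ ⟨hc, hTy⟩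
    refine ⟨Nat.zero_le _, ?_⟩
    have hry : y ≤ r := by
      have := letter_le_row hlam h0 hT r c hc
      omega
    exact lt_of_lt_of_le hc.2 (hlam hry)

lemma factB_yes (hlam : Antitone lam) (hmu : Antitone mu)
    (h0 : ∀ r, n ≤ r → lam r = 0) (hT : IsLRTableau lam mu nu T) (y r : ℕ)
    (h : ∃ c, (r + 1, c) ∈ skewCells lam mu ∧ T (r + 1, c) = y + 1) :
    letterCountLe lam mu T (y + 1) (r + 1) ≤ letterCountLe lam mu T y r := by
  classical
  have hfin : (skewCells lam mu).Finite := cells_finite hlam h0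
  have hspec := Nat.find_spec h
  set c0 := Nat.find h with hc0def
  obtain ⟨hc0cell, hc0T⟩ := hspec
  have hl := hT.2.2.2.2 (r + 1) c0 y
  have hAeq : {p ∈ skewCells lam mu |
      T p = y + 1 ∧ (p.1 < r + 1 ∨ (p.1 = r + 1 ∧ c0 ≤ p.2))} =
      {p ∈ skewCells lam mu | T p = y + 1 ∧ p.1 ≤ r + 1} := by
    ext p
    constructor
    · rintro ⟨hc, hTp, hreg⟩
      refine ⟨hc, hTp, ?_⟩
      rcases hreg with h' | ⟨h', _⟩ <;> omega
    · rintro ⟨hc, hTp, hle⟩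
      refine ⟨hc, hTp, ?_⟩
      rcases Nat.lt_or_ge p.1 (r + 1) with h' | h'
      · exact Or.inl h'
      · have heq : p.1 = r + 1 := by omega
        refine Or.inr ⟨heq, ?_⟩
        rw [hc0def]
        apply Nat.find_min' h
        constructor
        · rw [← heq, Prod.mk.eta]; exact hc
        · rw [← heq, Prod.mk.eta]; exact hTp
  have hsub : {p ∈ skewCells lam mu |
      T p = y ∧ (p.1 < r + 1 ∨ (p.1 = r + 1 ∧ c0 ≤ p.2))} ⊆
      {p ∈ skewCells lam mu | T p = y ∧ p.1 ≤ r} := by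
    rintro p ⟨hc, hTp, hreg⟩
    refine ⟨hc, hTp, ?_⟩
    rcases hreg with h' | ⟨heq, hge⟩
    · omega
    · exfalso
      have hp2 : p.2 < lam (r + 1) := by
        have := hc.2; rw [heq] at this; exact this
      have hrow := hT.2.1 (r + 1) c0 p.2 hc0cell.1 hge hp2
      have : T (r + 1, p.2) = y := by
        have hpe : (r + 1, p.2) = p := by rw [← heq]
        rw [hpe]; exact hTp
      omega
  calc letterCountLe lam mu T (y + 1) (r + 1)
      = ({p ∈ skewCells lam mu |
          T p = y + 1 ∧ (p.1 < r + 1 ∨ (p.1 = r + 1 ∧ c0 ≤ p.2))} : Set (ℕ × ℕ)).ncard := by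
        rw [letterCountLe, hAeq]
    _ ≤ ({p ∈ skewCells lam mu |
          T p = y ∧ (p.1 < r + 1 ∨ (p.1 = r + 1 ∧ c0 ≤ p.2))} : Set (ℕ × ℕ)).ncard := hl
    _ ≤ letterCountLe lam mu T y r :=
        Set.ncard_le_ncard hsub (hfin.subset (fun p hp => hp.1))

lemma letterCountLe_empty_of_big (hlam : Antitone lam) (h0 : ∀ r, n ≤ r → lam r = 0)
    (hT : IsLRTableau lam mu nu T) {y r : ℕ} (h : r < y) :
    letterCountLe lam mu T y r = 0 := by
  rw [letterCountLe]
  convert Set.ncard_empty (ℕ × ℕ)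
  rw [Set.eq_empty_iff_forall_notMem]
  rintro ⟨a, c⟩ ⟨hc, hTp, hle⟩
  have := letter_le_row hlam h0 hT a c hc
  omega

lemma letterCountLe_mono (hlam : Antitone lam) (h0 : ∀ r, n ≤ r → lam r = 0)
    {y r r' : ℕ} (h : r ≤ r') :
    letterCountLe lam mu T y r ≤ letterCountLe lam mu T y r' := by
  apply Set.ncard_le_ncard
  · rintro p ⟨hc, hTp, hle⟩; exact ⟨hc, hTp, le_trans hle h⟩
  · exact (cells_finite hlam h0).subset (fun p hp => hp.1)

lemma factB (hlam : Antitone lam) (hmu : Antitone mu)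
    (h0 : ∀ r, n ≤ r → lam r = 0) (hT : IsLRTableau lam mu nu T) (y r : ℕ) :
    letterCountLe lam mu T (y + 1) (r + 1) ≤ letterCountLe lam mu T y r := by
  induction r using Nat.strong_induction_on with
  | _ r ih =>
    by_cases h : ∃ c, (r + 1, c) ∈ skewCells lam mu ∧ T (r + 1, c) = y + 1
    · exact factB_yes hlam hmu h0 hT y r h
    · have heq : letterCountLe lam mu T (y + 1) (r + 1)
          = letterCountLe lam mu T (y + 1) r := by
        rw [letterCountLe, letterCountLe]
        congr 1
        ext p
        constructor
        · rintro ⟨hc, hTp, hle⟩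
          refine ⟨hc, hTp, ?_⟩
          by_contra h'
          have hp1 : p.1 = r + 1 := by omega
          exact h ⟨p.2, by rw [← hp1, Prod.mk.eta]; exact hc,
            by rw [← hp1, Prod.mk.eta]; exact hTp⟩
        · rintro ⟨hc, hTp, hle⟩; exact ⟨hc, hTp, by omega⟩
      rw [heq]
      cases r with
      | zero =>
        rw [letterCountLe_empty_of_big hlam h0 hT (show (0:ℕ) < y + 1 by omega)]
        exact Nat.zero_le _
      | succ r' =>
        exact le_trans (ih r' (by omega)) (letterCountLe_mono hlam h0 (by omega))

lemma factB_iter (hlam : Antitone lam) (hmu : Antitone mu)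
    (h0 : ∀ r, n ≤ r → lam r = 0) (hT : IsLRTableau lam mu nu T) (y r : ℕ) :
    ∀ q, letterCountLe lam mu T (y + q) (r + q) ≤ letterCountLe lam mu T y r := by
  intro q
  induction q with
  | zero => simp
  | succ q ih =>
    have := factB hlam hmu h0 hT (y + q) (r + q)
    calc letterCountLe lam mu T (y + (q + 1)) (r + (q + 1))
        = letterCountLe lam mu T ((y + q) + 1) ((r + q) + 1) := by ring_nf
      _ ≤ letterCountLe lam mu T (y + q) (r + q) := this
      _ ≤ letterCountLe lam mu T y r := ih

lemma row_telescope (hlam : Antitone lam) (hmu : Antitone mu)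
    (h0 : ∀ r, n ≤ r → lam r = 0) (hT : IsLRTableau lam mu nu T) (R : ℕ) :
    ∀ d w, w + d = R + 1 →
      Set.ncard {p ∈ skewCells lam mu | T p ≥ w ∧ p.1 = R} ≤ letterCountLe lam mu T w R := by
  have hfin : (skewCells lam mu).Finite := cells_finite hlam h0
  intro d
  induction d with
  | zero =>
    intro w hw
    have : {p ∈ skewCells lam mu | T p ≥ w ∧ p.1 = R} = (∅ : Set (ℕ × ℕ)) := by
      rw [Set.eq_empty_iff_forall_notMem]
      rintro ⟨a, c⟩ ⟨hc, hge, heq⟩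
      have := letter_le_row hlam h0 hT a c hc
      omega
    rw [this, Set.ncard_empty]
    exact Nat.zero_le _
  | succ d ih =>
    intro w hw
    have hsplit : {p ∈ skewCells lam mu | T p ≥ w ∧ p.1 = R} =
        {p ∈ skewCells lam mu | T p = w ∧ p.1 = R} ∪
        {p ∈ skewCells lam mu | T p ≥ w + 1 ∧ p.1 = R} := by
      ext p
      constructor
      · rintro ⟨hc, hge, heq⟩
        rcases Nat.eq_or_lt_of_le hge with h' | h'
        · exact Or.inl ⟨hc, h'.symm, heq⟩
        · exact Or.inr ⟨hc, h', heq⟩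
      · rintro (⟨hc, he, heq⟩ | ⟨hc, hge, heq⟩)
        · exact ⟨hc, le_of_eq he.symm, heq⟩
        · exact ⟨hc, by omega, heq⟩
    have h2 : Set.ncard {p ∈ skewCells lam mu | T p ≥ w + 1 ∧ p.1 = R} ≤
        letterCountLe lam mu T (w + 1) R := ih (w + 1) (by omega)
    cases R with
    | zero =>
      -- w = 0 (since w + d + 1 = 1 forces w = 0, d = 0)
      have hw0 : w = 0 := by omega
      subst hw0
      apply Set.ncard_le_ncard
      · rintro p ⟨hc, _, heq⟩
        refine ⟨hc, ?_, by omega⟩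
        have := letter_le_row hlam h0 hT p.1 p.2 (by rw [Prod.mk.eta]; exact hc)
        rw [Prod.mk.eta] at this
        omega
      · exact hfin.subset (fun p hp => hp.1)
    | succ R' =>
      have h3 : letterCountLe lam mu T (w + 1) (R' + 1) ≤ letterCountLe lam mu T w R' :=
        factB hlam hmu h0 hT w R'
      have h4 : letterCountLe lam mu T w (R' + 1) =
          letterCountLe lam mu T w R' +
          Set.ncard {p ∈ skewCells lam mu | T p = w ∧ p.1 = R' + 1} := by
        rw [letterCountLe, letterCountLe]
        have hdecomp : {p ∈ skewCells lam mu | T p = w ∧ p.1 ≤ R' + 1} =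
            {p ∈ skewCells lam mu | T p = w ∧ p.1 ≤ R'} ∪
            {p ∈ skewCells lam mu | T p = w ∧ p.1 = R' + 1} := by
          ext p
          constructor
          · rintro ⟨hc, he, hle⟩
            rcases Nat.lt_or_ge p.1 (R' + 1) with h' | h'
            · exact Or.inl ⟨hc, he, by omega⟩
            · exact Or.inr ⟨hc, he, by omega⟩
          · rintro (⟨hc, he, hle⟩ | ⟨hc, he, heq⟩)
            · exact ⟨hc, he, by omega⟩
            · exact ⟨hc, he, by omega⟩
        rw [hdecomp]
        apply Set.ncard_union_eq
        · rw [Set.disjoint_left]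
          rintro p ⟨_, _, hle⟩ ⟨_, _, heq⟩
          omega
        · exact hfin.subset (fun p hp => hp.1)
        · exact hfin.subset (fun p hp => hp.1)
      have h5 : Set.ncard ({p ∈ skewCells lam mu | T p = w ∧ p.1 = R' + 1} ∪
          {p ∈ skewCells lam mu | T p ≥ w + 1 ∧ p.1 = R' + 1}) ≤
          Set.ncard {p ∈ skewCells lam mu | T p = w ∧ p.1 = R' + 1} +
          Set.ncard {p ∈ skewCells lam mu | T p ≥ w + 1 ∧ p.1 = R' + 1} :=
        Set.ncard_union_le _ _
      rw [hsplit]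
      calc Set.ncard ({p ∈ skewCells lam mu | T p = w ∧ p.1 = R' + 1} ∪
          {p ∈ skewCells lam mu | T p ≥ w + 1 ∧ p.1 = R' + 1})
          ≤ Set.ncard {p ∈ skewCells lam mu | T p = w ∧ p.1 = R' + 1} +
            Set.ncard {p ∈ skewCells lam mu | T p ≥ w + 1 ∧ p.1 = R' + 1} := h5
        _ ≤ Set.ncard {p ∈ skewCells lam mu | T p = w ∧ p.1 = R' + 1} +
            letterCountLe lam mu T (w + 1) (R' + 1) := by
            have := ih (w + 1) (by omega)
            omega
        _ ≤ Set.ncard {p ∈ skewCells lam mu | T p = w ∧ p.1 = R' + 1} +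
            letterCountLe lam mu T w R' := by omega
        _ = letterCountLe lam mu T w (R' + 1) := by omega

lemma weyl (hlam : Antitone lam) (hmu : Antitone mu)
    (h0 : ∀ r, n ≤ r → lam r = 0) (hT : IsLRTableau lam mu nu T) (x y : ℕ) :
    lam (x + y) ≤ mu x + nu y := by
  have hfin : (skewCells lam mu).Finite := cells_finite hlam h0
  set R := x + y with hR
  have himg : (fun c => (R, c)) '' (Set.Ico (mu x) (lam R)) ⊆
      {p ∈ skewCells lam mu | T p ≥ y ∧ p.1 = R} := by
    rintro _ ⟨c, hc, rfl⟩
    show (R, c) ∈ {p ∈ skewCells lam mu | T p ≥ y ∧ p.1 = R}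
    rw [Set.mem_Ico] at hc
    have hcell : (R, c) ∈ skewCells lam mu :=
      ⟨le_trans (hmu (by omega : x ≤ R)) hc.1, hc.2⟩
    refine ⟨hcell, ?_, rfl⟩
    have hxcell : (x, c) ∈ skewCells lam mu :=
      ⟨hc.1, lt_of_lt_of_le hc.2 (hlam (by omega : x ≤ R))⟩
    have := colchain hlam hmu hT y x c hxcell (by rw [← hR]; exact hcell)
    rw [← hR] at this
    omega
  have hinj : Set.InjOn (fun c => (R, c)) (Set.Ico (mu x) (lam R)) := by
    intro a _ b _ h
    exact congrArg Prod.snd h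
  have h1 : lam R - mu x ≤
      Set.ncard {p ∈ skewCells lam mu | T p ≥ y ∧ p.1 = R} := by
    have e1 : ((fun c => (R, c)) '' (Set.Ico (mu x) (lam R))).ncard = lam R - mu x := by
      rw [Set.ncard_image_of_injOn hinj, ← Finset.coe_Ico, Set.ncard_coe_finset,
        Nat.card_Ico]
    rw [← e1]
    exact Set.ncard_le_ncard himg (hfin.subset (fun p hp => hp.1))
  have h2 := row_telescope hlam hmu h0 hT R (x + 1) y (by omega)
  have h3 : letterCountLe lam mu T y R ≤ nu y := by
    rw [← hT.2.2.2.1 y]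
    apply Set.ncard_le_ncard
    · rintro p ⟨hc, hTp, _⟩; exact ⟨hc, hTp⟩
    · exact hfin.subset (fun p hp => hp.1)
  omega

lemma key5 (hlam : Antitone lam) (hmu : Antitone mu)
    (h0 : ∀ r, n ≤ r → lam r = 0) (hT : IsLRTableau lam mu nu T)
    (A B S : ℕ) (hSA : S ≤ A) (hSB : S ≤ B) :
    mu A + nu B ≤ lam S + lam (A + (B - S) + 1) := by
  have hfin : (skewCells lam mu).Finite := cells_finite hlam h0
  set D := A + (B - S) with hD
  -- split the letter-B cells at row D
  have hsplit : {p ∈ skewCells lam mu | T p = B} =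
      {p ∈ skewCells lam mu | T p = B ∧ p.1 ≤ D} ∪
      {p ∈ skewCells lam mu | T p = B ∧ D + 1 ≤ p.1} := by
    ext p
    constructor
    · rintro ⟨hc, he⟩
      rcases Nat.lt_or_ge D p.1 with h' | h'
      · exact Or.inr ⟨hc, he, by omega⟩
      · exact Or.inl ⟨hc, he, h'⟩
    · rintro (⟨hc, he, _⟩ | ⟨hc, he, _⟩) <;> exact ⟨hc, he⟩
  have e0 : nu B = letterCountLe lam mu T B D +
      Set.ncard {p ∈ skewCells lam mu | T p = B ∧ D + 1 ≤ p.1} := by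
    rw [← hT.2.2.2.1 B, hsplit, letterCountLe]
    apply Set.ncard_union_eq
    · rw [Set.disjoint_left]
      rintro p ⟨_, _, h1⟩ ⟨_, _, h2⟩
      omega
    · exact hfin.subset (fun p hp => hp.1)
    · exact hfin.subset (fun p hp => hp.1)
  have e1 : Set.ncard {p ∈ skewCells lam mu | T p = B ∧ D + 1 ≤ p.1} ≤ lam (D + 1) := by
    have := ncard_le_Ico (s := {p ∈ skewCells lam mu | T p = B ∧ D + 1 ≤ p.1})
      hlam hmu hT (y := B) (lo := 0) (hi := lam (D + 1))
      (fun p hp => ⟨hp.1, hp.2.1⟩) ?_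
    · omega
    · rintro p ⟨hc, _, hge⟩
      exact ⟨Nat.zero_le _, lt_of_lt_of_le hc.2 (hlam hge)⟩
  have e2 : letterCountLe lam mu T B D ≤ letterCountLe lam mu T S A := by
    have := factB_iter hlam hmu h0 hT S A (B - S)
    rw [show S + (B - S) = B by omega] at this
    exact this
  have e3 : letterCountLe lam mu T S A ≤ lam S - mu A := by
    apply ncard_le_Ico hlam hmu hT (y := S) (lo := mu A) (hi := lam S)
      (fun p hp => ⟨hp.1, hp.2.1⟩)
    rintro ⟨r, c⟩ ⟨hc, hTp, hle⟩
    constructor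
    · exact le_trans (hmu hle) hc.1
    · have hSr : S ≤ r := by
        have := letter_le_row hlam h0 hT r c hc
        omega
      exact lt_of_lt_of_le hc.2 (hlam hSr)
  have e4 : mu A ≤ lam S := le_trans (hmu hSA) (hT.1 S)
  omega

end ExtendedWeylAux

/-- Theorem 2.4 (extended Weyl inequalities): if `N_{μ,ν,λ} > 0` and
`1 ≤ k ≤ i < j ≤ l ≤ n`, `m = min(i−k, l−j)`, `M = max(i−k, l−j)`,
`0 ≤ p ≤ m`, then `μ_i − μ_j ≤ λ_k − λ_l + ν_{m−p+1} + ν_{M+p+2}`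
(indices of the partitions are the paper's 1-indexed ones, so `μ_i` is
`μ (i − 1)`; parts beyond `n` vanish since `ν ∈ Par_n`). -/

theorem extended_weyl_of_nlNumber_pos (n : ℕ) (μ ν lam : ℕ → ℕ)
    (hμ : IsPartitionN n μ) (hν : IsPartitionN n ν) (hlam : IsPartitionN n lam)
    (hN : 0 < nlNumber μ ν lam)
    (k i j l p : ℕ) (hk : 1 ≤ k) (hki : k ≤ i) (hij : i < j) (hjl : j ≤ l)
    (hln : l ≤ n) (hp : p ≤ min (i - k) (l - j)) :
    (μ (i - 1) : ℤ) - (μ (j - 1) : ℤ) ≤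
      (lam (k - 1) : ℤ) - (lam (l - 1) : ℤ) +
      (ν (min (i - k) (l - j) - p) : ℤ) +
      (ν (max (i - k) (l - j) + p + 1) : ℤ) := by
  obtain ⟨x, hx⟩ := Set.nonempty_of_ncard_ne_zero hN.ne'
  simp only [Set.mem_setOf_eq] at hx
  obtain ⟨hα, hβ, hγ, ⟨hT1, -⟩, ⟨hT2, -⟩, ⟨hT3, -⟩⟩ := hx
  -- e1 : μ (i-1) ≤ α (i-k) + β (k-1)
  have e1 : μ (i - 1) ≤ x.1.1 (i - k) + x.1.2.1 (k - 1) := by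
    have := ExtendedWeylAux.weyl hμ.1 hα hμ.2 hT1 (i - k) (k - 1)
    rw [show i - k + (k - 1) = i - 1 by omega] at this
    exact this
  -- e2 : β (j-1) ≤ μ (j-1)
  have e2 : x.1.2.1 (j - 1) ≤ μ (j - 1) :=
    ExtendedWeylAux.content_le_outer hμ.1 hα hμ.2 hT1 (j - 1)
  -- e3 : β (k-1) ≤ lam (k-1)
  have e3 : x.1.2.1 (k - 1) ≤ lam (k - 1) := hT3.1 (k - 1)
  -- e4 : lam (l-1) ≤ β (j-1) + γ (l-j)
  have e4 : lam (l - 1) ≤ x.1.2.1 (j - 1) + x.1.2.2 (l - j) := by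
    have := ExtendedWeylAux.weyl hlam.1 hβ hlam.2 hT3 (j - 1) (l - j)
    rw [show j - 1 + (l - j) = l - 1 by omega] at this
    exact this
  -- e5 : α (i-k) + γ (l-j) ≤ ν (min - p) + ν (max + p + 1)
  have e5 : x.1.1 (i - k) + x.1.2.2 (l - j) ≤
      ν (min (i - k) (l - j) - p) + ν (max (i - k) (l - j) + p + 1) := by
    have := ExtendedWeylAux.key5 hν.1 hα hν.2 hT2 (i - k) (l - j)
      (min (i - k) (l - j) - p) (by omega) (by omega)
    rw [show i - k + (l - j - (min (i - k) (l - j) - p)) + 1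
        = max (i - k) (l - j) + p + 1 by omega] at this
    exact this
  omega
end

section
/- Let (μ,ν,λ) ∈ Par_n^3 satisfy every extended Horn inequality. Then for all 1 ≤ k ≤ i < j ≤ l ≤ n, with m = min(i−k, l−j) and M = max(i−k, l−j), and every 0 ≤ p ≤ m, one has μ_i − μ_j ≤ λ_k − λ_l + ν_{m−p+1} + ν_{M+p+2} (with ν_r = 0 for r > n), and the same holds for every permutation of the roles of μ, ν, λ. -/
/-- Conditions (I)–(III) defining the set `𝒢_n` of data for the extended Horn
inequalities: all six sets are subsets of `{0, …, n−1}` (the 0-indexed version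
of `[n] = {1, …, n}`), `A ∩ A' = B ∩ B' = C ∩ C' = ∅`,
`|A| = |B'| + |C'|`, `|B| = |A'| + |C'|`, `|C| = |A'| + |B'|`, and there exist
`A₁, A₂, B₁, B₂, C₁, C₂ ⊆ {0, …, n−1}` with `|A₁| = |A₂| = |A'|`,
`|B₁| = |B₂| = |B'|`, `|C₁| = |C₂| = |C'|` such that
`c^{τ(A')}_{τ(A₁),τ(A₂)}, c^{τ(B')}_{τ(B₁),τ(B₂)}, c^{τ(C')}_{τ(C₁),τ(C₂)} > 0`
and `c^{τ(A)}_{τ(B₁),τ(C₂)}, c^{τ(B)}_{τ(C₁),τ(A₂)}, c^{τ(C)}_{τ(A₁),τ(B₂)} > 0`. -/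
def IsExtHornTuple (n : ℕ) (A A' B B' C C' : Finset ℕ) : Prop :=
  A ⊆ Finset.range n ∧ A' ⊆ Finset.range n ∧ B ⊆ Finset.range n ∧
    B' ⊆ Finset.range n ∧ C ⊆ Finset.range n ∧ C' ⊆ Finset.range n ∧
  Disjoint A A' ∧ Disjoint B B' ∧ Disjoint C C' ∧
  A.card = B'.card + C'.card ∧ B.card = A'.card + C'.card ∧
    C.card = A'.card + B'.card ∧
  ∃ A₁ A₂ B₁ B₂ C₁ C₂ : Finset ℕ,
    A₁ ⊆ Finset.range n ∧ A₂ ⊆ Finset.range n ∧ B₁ ⊆ Finset.range n ∧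
      B₂ ⊆ Finset.range n ∧ C₁ ⊆ Finset.range n ∧ C₂ ⊆ Finset.range n ∧
    A₁.card = A'.card ∧ A₂.card = A'.card ∧ B₁.card = B'.card ∧
      B₂.card = B'.card ∧ C₁.card = C'.card ∧ C₂.card = C'.card ∧
    0 < lrCoeff (tauPartition A') (tauPartition A₁) (tauPartition A₂) ∧
    0 < lrCoeff (tauPartition B') (tauPartition B₁) (tauPartition B₂) ∧
    0 < lrCoeff (tauPartition C') (tauPartition C₁) (tauPartition C₂) ∧
    0 < lrCoeff (tauPartition A) (tauPartition B₁) (tauPartition C₂) ∧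
    0 < lrCoeff (tauPartition B) (tauPartition C₁) (tauPartition A₂) ∧
    0 < lrCoeff (tauPartition C) (tauPartition A₁) (tauPartition B₂)

/-- `(μ, ν, lam)` satisfies every extended Horn inequality (with ambient set
`{0, …, n−1}`). -/
def SatisfiesExtHorn (n : ℕ) (μ ν lam : ℕ → ℕ) : Prop :=
  ∀ A A' B B' C C' : Finset ℕ, IsExtHornTuple n A A' B B' C C' →
    (0 : ℤ) ≤ (∑ i ∈ A, (μ i : ℤ)) - (∑ i ∈ A', (μ i : ℤ)) +
      (∑ j ∈ B, (ν j : ℤ)) - (∑ j ∈ B', (ν j : ℤ)) +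
      (∑ k ∈ C, (lam k : ℤ)) - (∑ k ∈ C', (lam k : ℤ))

/-! Each extended Weyl inequality is the extended Horn inequality of a tuple built from
singletons and one pair `{a, b}` of indices of the middle partition. Every Littlewood–Richardson
coefficient in condition (III) for these tuples is a Pieri coefficient `c^{(u,v)}_{(a),(b)}`,
which equals `1` when `v ≤ a ≤ u` and `a + b = u + v`. Condition (III) is invariant under
rotating the three pairs of sets cyclically, hence so are the extended Horn inequalities, and
two tuples cover all six permutations. -/

def twoRow (u v : ℕ) : ℕ → ℕ := fun t => if t = 0 then u else if t = 1 then v else 0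

lemma tauPartition_empty : tauPartition ∅ = twoRow 0 0 := by
  funext t
  simp [tauPartition, twoRow]

lemma tauPartition_singleton (x : ℕ) : tauPartition {x} = twoRow x 0 := by
  funext t
  rcases t with _ | _ | t <;> simp [tauPartition, twoRow]

lemma tauPartition_pair {x y : ℕ} (h : x < y) : tauPartition {x, y} = twoRow (y - 1) x := by
  have hsort : ({x, y} : Finset ℕ).sort (· ≤ ·) = [x, y] := by
    rw [Finset.sort_insert (· ≤ ·) (by simpa using h.le) (by simpa using h.ne),
      Finset.sort_singleton]
  have hcard : ({x, y} : Finset ℕ).card = 2 := Finset.card_pair h.ne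
  funext t
  rcases t with _ | _ | t <;> simp [tauPartition, twoRow, hsort, hcard]

/-- Pieri's rule: with a one-row content every letter must be `0`, so the zero filling is the
only candidate tableau. -/
theorem lrCoeff_eq_one_of_horizontalStrip {lam mu nu : ℕ → ℕ}
    (hfin : (skewCells lam mu).Finite) (hle : ∀ i, mu i ≤ lam i)
    (hstrip : ∀ i j, (i, j) ∈ skewCells lam mu → (i + 1, j) ∉ skewCells lam mu)
    (hcard : (skewCells lam mu).ncard = nu 0) (hnu : ∀ t, nu (t + 1) = 0) :
    lrCoeff lam mu nu = 1 := by
  have hzero : IsLRTableau lam mu nu 0 := by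
    refine ⟨hle, fun _ _ _ _ _ _ => le_rfl, fun i j h h' => absurd h' (hstrip i j h), ?_, ?_⟩
    · rintro (_ | t)
      · simpa using hcard
      · simp [hnu]
    · simp
  have hunique : ∀ T, IsLRTableau lam mu nu T → (∀ p ∉ skewCells lam mu, T p = 0) → T = 0 := by
    rintro T ⟨-, -, -, hcontent, -⟩ hnorm
    funext q
    by_cases hq : q ∈ skewCells lam mu
    · by_contra hTq
      obtain ⟨t, ht⟩ := Nat.exists_eq_succ_of_ne_zero hTq
      have hempty := (Set.ncard_eq_zero (hfin.subset fun _ hp => hp.1)).mp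
        ((hcontent (t + 1)).trans (hnu t))
      exact (Set.ext_iff.mp hempty q).mp ⟨hq, ht⟩
    · exact hnorm q hq
  have hset : {T | IsLRTableau lam mu nu T ∧ ∀ p ∉ skewCells lam mu, T p = 0} = {0} :=
    Set.eq_singleton_iff_unique_mem.mpr
      ⟨⟨hzero, fun _ _ => rfl⟩, fun T hT => hunique T hT.1 hT.2⟩
  rw [lrCoeff, hset, Set.ncard_singleton]

lemma skewCells_twoRow (u v a : ℕ) :
    skewCells (twoRow u v) (twoRow a 0) =
      ↑(({0} ×ˢ Finset.Ico a u ∪ {1} ×ˢ Finset.range v : Finset (ℕ × ℕ))) := by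
  ext ⟨r, c⟩
  simp only [skewCells, twoRow, Set.mem_ofPred_eq, Finset.coe_union, Finset.coe_product,
    Set.mem_union, Set.mem_prod, Finset.mem_coe, Finset.mem_singleton, Finset.mem_Ico,
    Finset.mem_range]
  split_ifs <;> omega

lemma lrCoeff_twoRow_pos {u v a b : ℕ} (hva : v ≤ a) (hau : a ≤ u) (hab : a + b = u + v) :
    0 < lrCoeff (twoRow u v) (twoRow a 0) (twoRow b 0) := by
  have hdisj : Disjoint ({0} ×ˢ Finset.Ico a u : Finset (ℕ × ℕ)) ({1} ×ˢ Finset.range v) :=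
    Finset.disjoint_product.mpr (Or.inl (by simp))
  rw [lrCoeff_eq_one_of_horizontalStrip]
  · exact one_pos
  · rw [skewCells_twoRow]
    exact Finset.finite_toSet _
  · intro t
    simp only [twoRow]
    split_ifs <;> omega
  · intro r c
    simp only [skewCells_twoRow, Finset.coe_union, Finset.coe_product, Set.mem_union,
      Set.mem_prod, Finset.mem_coe, Finset.mem_singleton, Finset.mem_Ico, Finset.mem_range]
    omega
  · rw [skewCells_twoRow, Set.ncard_coe_finset, Finset.card_union_of_disjoint hdisj]
    simp [twoRow]
    omega
  · simp [twoRow]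

lemma IsExtHornTuple.rotate {n : ℕ} {A A' B B' C C' : Finset ℕ}
    (h : IsExtHornTuple n A A' B B' C C') : IsExtHornTuple n C C' A A' B B' := by
  obtain ⟨hA, hA', hB, hB', hC, hC', dA, dB, dC, cA, cB, cC, A₁, A₂, B₁, B₂, C₁, C₂,
    hA₁, hA₂, hB₁, hB₂, hC₁, hC₂, cA₁, cA₂, cB₁, cB₂, cC₁, cC₂, lA', lB', lC', lA, lB, lC⟩ := h
  exact ⟨hC, hC', hA, hA', hB, hB', dC, dA, dB, cC, cA.trans (add_comm _ _),
    cB.trans (add_comm _ _), C₁, C₂, A₁, A₂, B₁, B₂,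
    hC₁, hC₂, hA₁, hA₂, hB₁, hB₂, cC₁, cC₂, cA₁, cA₂, cB₁, cB₂, lC', lA', lB', lC, lA, lB⟩

lemma SatisfiesExtHorn.rotate {n : ℕ} {μ ν lam : ℕ → ℕ} (h : SatisfiesExtHorn n μ ν lam) :
    SatisfiesExtHorn n ν lam μ := by
  intro A A' B B' C C' hABC
  have := h C C' A A' B B' hABC.rotate
  linarith

lemma SatisfiesExtHorn.rotate_vecCons {n : ℕ} {μ ν lam : ℕ → ℕ}
    (h : SatisfiesExtHorn n μ ν lam) (r : Fin 3) :
    SatisfiesExtHorn n (![μ, ν, lam] r) (![μ, ν, lam] (r + 1)) (![μ, ν, lam] (r + 2)) := by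
  fin_cases r
  · exact h
  · exact h.rotate
  · exact h.rotate.rotate

lemma Equiv.Perm.fin_three_cases (σ : Equiv.Perm (Fin 3)) :
    (σ 1 = σ 0 + 1 ∧ σ 2 = σ 0 + 2) ∨ (σ 1 = σ 0 + 2 ∧ σ 2 = σ 0 + 1) := by
  revert σ
  decide

section Weyl

variable {n k i j l a b : ℕ}

lemma isExtHornTuple_weyl (hki : k ≤ i) (hij : i < j) (hjl : j ≤ l) (hln : l < n)
    (ha : a ≤ i - k) (ha' : a ≤ l - j) (hab : a + b = i - k + (l - j) + 1) :
    IsExtHornTuple n {j} {i} {a, b} ∅ {k} {l} := by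
  have hlt : a < b := by omega
  refine ⟨?_, ?_, ?_, ?_, ?_, ?_, ?_, ?_, ?_, ?_, ?_, ?_,
    {k}, {i - k}, ∅, ∅, {l - j}, {j}, ?_⟩
  all_goals simp only [tauPartition_pair hlt, tauPartition_singleton, tauPartition_empty,
    Finset.card_pair hlt.ne, Finset.card_singleton, Finset.card_empty, Finset.empty_subset,
    Finset.singleton_subset_iff, Finset.insert_subset_iff, Finset.mem_range,
    Finset.disjoint_singleton, Finset.disjoint_empty_right]
  and_intros
  all_goals first
    | exact lrCoeff_twoRow_pos (by omega) (by omega) (by omega)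
    | omega
    | trivial

lemma isExtHornTuple_weyl_swap (hki : k ≤ i) (hij : i < j) (hjl : j ≤ l) (hln : l < n)
    (ha : a ≤ i - k) (ha' : a ≤ l - j) (hab : a + b = i - k + (l - j) + 1) :
    IsExtHornTuple n {j} {i} {k} {l} {a, b} ∅ := by
  have hlt : a < b := by omega
  refine ⟨?_, ?_, ?_, ?_, ?_, ?_, ?_, ?_, ?_, ?_, ?_, ?_,
    {i - k}, {k}, {j}, {l - j}, ∅, ∅, ?_⟩
  all_goals simp only [tauPartition_pair hlt, tauPartition_singleton, tauPartition_empty,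
    Finset.card_pair hlt.ne, Finset.card_singleton, Finset.card_empty, Finset.empty_subset,
    Finset.singleton_subset_iff, Finset.insert_subset_iff, Finset.mem_range,
    Finset.disjoint_singleton, Finset.disjoint_empty_right]
  and_intros
  all_goals first
    | exact lrCoeff_twoRow_pos (by omega) (by omega) (by omega)
    | omega
    | trivial

lemma SatisfiesExtHorn.weyl {x y z : ℕ → ℕ} (h : SatisfiesExtHorn n x y z)
    (hki : k ≤ i) (hij : i < j) (hjl : j ≤ l) (hln : l < n)
    (ha : a ≤ i - k) (ha' : a ≤ l - j) (hab : a + b = i - k + (l - j) + 1) :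
    (x i : ℤ) - x j ≤ z k - z l + y a + y b := by
  have := h _ _ _ _ _ _ (isExtHornTuple_weyl hki hij hjl hln ha ha' hab)
  simp only [Finset.sum_singleton, Finset.sum_empty, Finset.sum_pair (by omega : a ≠ b)] at this
  linarith

lemma SatisfiesExtHorn.weyl_swap {x y z : ℕ → ℕ} (h : SatisfiesExtHorn n x z y)
    (hki : k ≤ i) (hij : i < j) (hjl : j ≤ l) (hln : l < n)
    (ha : a ≤ i - k) (ha' : a ≤ l - j) (hab : a + b = i - k + (l - j) + 1) :
    (x i : ℤ) - x j ≤ z k - z l + y a + y b := by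
  have := h _ _ _ _ _ _ (isExtHornTuple_weyl_swap hki hij hjl hln ha ha' hab)
  simp only [Finset.sum_singleton, Finset.sum_empty, Finset.sum_pair (by omega : a ≠ b)] at this
  linarith

end Weyl

theorem extended_weyl_of_satisfiesExtHorn_general (n : ℕ) (μ ν lam : ℕ → ℕ)
    (hEH : SatisfiesExtHorn n μ ν lam) (σ : Equiv.Perm (Fin 3))
    (k i j l p : ℕ) (hk : 1 ≤ k) (hki : k ≤ i) (hij : i < j) (hjl : j ≤ l)
    (hln : l ≤ n) (hp : p ≤ min (i - k) (l - j)) :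
    ((![μ, ν, lam] (σ 0)) (i - 1) : ℤ) - ((![μ, ν, lam] (σ 0)) (j - 1) : ℤ) ≤
      ((![μ, ν, lam] (σ 2)) (k - 1) : ℤ) - ((![μ, ν, lam] (σ 2)) (l - 1) : ℤ) +
      ((![μ, ν, lam] (σ 1)) (min (i - k) (l - j) - p) : ℤ) +
      ((![μ, ν, lam] (σ 1)) (max (i - k) (l - j) + p + 1) : ℤ) := by
  have hrot := hEH.rotate_vecCons (σ 0)
  rcases σ.fin_three_cases with ⟨h1, h2⟩ | ⟨h1, h2⟩ <;> rw [h1, h2]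
  · exact hrot.weyl (by omega) (by omega) (by omega) (by omega) (by omega) (by omega) (by omega)
  · exact hrot.weyl_swap (by omega) (by omega) (by omega) (by omega) (by omega) (by omega)
      (by omega)

/-- Proposition 2.5(ii): the extended Horn inequalities imply all
`S₃`-permutations of the extended Weyl inequalities.  The permutation `σ`
permutes the roles of `μ, ν, lam`; indices `k ≤ i < j ≤ l` are the paper's
1-indexed ones. -/
theorem extended_weyl_of_satisfiesExtHorn (n : ℕ) (μ ν lam : ℕ → ℕ)
    (hμ : IsPartitionN n μ) (hν : IsPartitionN n ν) (hlam : IsPartitionN n lam)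
    (hEH : SatisfiesExtHorn n μ ν lam) (σ : Equiv.Perm (Fin 3))
    (k i j l p : ℕ) (hk : 1 ≤ k) (hki : k ≤ i) (hij : i < j) (hjl : j ≤ l)
    (hln : l ≤ n) (hp : p ≤ min (i - k) (l - j)) :
    ((![μ, ν, lam] (σ 0)) (i - 1) : ℤ) - ((![μ, ν, lam] (σ 0)) (j - 1) : ℤ) ≤
      ((![μ, ν, lam] (σ 2)) (k - 1) : ℤ) - ((![μ, ν, lam] (σ 2)) (l - 1) : ℤ) +
      ((![μ, ν, lam] (σ 1)) (min (i - k) (l - j) - p) : ℤ) +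
      ((![μ, ν, lam] (σ 1)) (max (i - k) (l - j) + p + 1) : ℤ) :=
  extended_weyl_of_satisfiesExtHorn_general n μ ν lam hEH σ k i j l p hk hki hij hjl hln hp
end

section
/- Let (μ,ν,λ) ∈ Par_n^3 satisfy every extended Horn inequality. Then the triangle inequalities hold: |λ| ≤ |μ| + |ν|, |μ| ≤ |ν| + |λ|, and |ν| ≤ |μ| + |λ|. -/
lemma tauPartition_empty_s7 : tauPartition (∅ : Finset ℕ) = fun _ => 0 := by
  funext t; simp [tauPartition]

lemma tauPartition_range (n : ℕ) : tauPartition (Finset.range n) = fun _ => 0 := by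
  funext t
  simp only [tauPartition, Finset.card_range, Finset.sort_range]
  split_ifs with h
  · rw [List.getD_eq_getElem _ _ (by simp; omega)]
    simp
  · rfl

lemma lrCoeff_zero_pos :
    0 < lrCoeff (fun _ => 0) (fun _ => 0) (fun _ => 0) := by
  have hcells : skewCells (fun _ => 0) (fun _ => 0) = ∅ := by
    ext p; simp [skewCells]
  have : {T : ℕ × ℕ → ℕ | IsLRTableau (fun _ => 0) (fun _ => 0) (fun _ => 0) T ∧
      ∀ p ∉ skewCells (fun _ => 0) (fun _ => 0), T p = 0} = {fun _ => 0} := by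
    ext T
    constructor
    · rintro ⟨-, h⟩
      funext p
      exact h p (by simp [hcells])
    · rintro rfl
      refine ⟨⟨fun i => le_refl 0, fun i j j' h1 h2 h3 => by omega,
        fun i j hij => by simp [hcells] at hij,
        fun t => by rw [hcells]; simp, fun i j t => by rw [hcells]; simp⟩,
        fun p _ => rfl⟩
  rw [lrCoeff, this]
  simp

lemma tau_zero {n : ℕ} {S : Finset ℕ} (h : S = ∅ ∨ S = Finset.range n) :
    tauPartition S = fun _ => 0 := by
  rcases h with rfl | rfl
  · exact tauPartition_empty_s7
  · exact tauPartition_range n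

lemma horn_tuple (n : ℕ) {A A' B B' C C' : Finset ℕ}
    (hA : A = ∅ ∨ A = Finset.range n) (hA' : A' = ∅ ∨ A' = Finset.range n)
    (hB : B = ∅ ∨ B = Finset.range n) (hB' : B' = ∅ ∨ B' = Finset.range n)
    (hC : C = ∅ ∨ C = Finset.range n) (hC' : C' = ∅ ∨ C' = Finset.range n)
    (hdA : Disjoint A A') (hdB : Disjoint B B') (hdC : Disjoint C C')
    (h1 : A.card = B'.card + C'.card) (h2 : B.card = A'.card + C'.card)
    (h3 : C.card = A'.card + B'.card) :
    IsExtHornTuple n A A' B B' C C' := by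
  have sub : ∀ S : Finset ℕ, S = ∅ ∨ S = Finset.range n → S ⊆ Finset.range n := by
    rintro S (rfl | rfl) <;> simp
  refine ⟨sub A hA, sub A' hA', sub B hB, sub B' hB', sub C hC, sub C' hC',
    hdA, hdB, hdC, h1, h2, h3, A', A', B', B', C', C',
    sub A' hA', sub A' hA', sub B' hB', sub B' hB', sub C' hC', sub C' hC',
    rfl, rfl, rfl, rfl, rfl, rfl, ?_, ?_, ?_, ?_, ?_, ?_⟩ <;>
    simp only [tau_zero hA, tau_zero hA', tau_zero hB, tau_zero hB',
      tau_zero hC, tau_zero hC'] <;>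
    exact lrCoeff_zero_pos

/-- Proposition 2.5(iv): the extended Horn inequalities imply the triangle
inequalities on `|μ|`, `|ν|` and `|lam|`. -/
theorem triangle_of_satisfiesExtHorn (n : ℕ) (μ ν lam : ℕ → ℕ)
    (hμ : IsPartitionN n μ) (hν : IsPartitionN n ν) (hlam : IsPartitionN n lam)
    (hEH : SatisfiesExtHorn n μ ν lam) :
    (∑ i ∈ Finset.range n, lam i ≤
      (∑ i ∈ Finset.range n, μ i) + ∑ i ∈ Finset.range n, ν i) ∧
    (∑ i ∈ Finset.range n, μ i ≤
      (∑ i ∈ Finset.range n, ν i) + ∑ i ∈ Finset.range n, lam i) ∧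
    (∑ i ∈ Finset.range n, ν i ≤
      (∑ i ∈ Finset.range n, μ i) + ∑ i ∈ Finset.range n, lam i) := by
  have hEH1 := hEH (Finset.range n) ∅ (Finset.range n) ∅ ∅ (Finset.range n)
    (horn_tuple n (Or.inr rfl) (Or.inl rfl) (Or.inr rfl) (Or.inl rfl)
      (Or.inl rfl) (Or.inr rfl) (by simp) (by simp) (by simp)
      (by simp) (by simp) (by simp))
  have hEH2 := hEH ∅ (Finset.range n) (Finset.range n) ∅ (Finset.range n) ∅
    (horn_tuple n (Or.inl rfl) (Or.inr rfl) (Or.inr rfl) (Or.inl rfl)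
      (Or.inr rfl) (Or.inl rfl) (by simp) (by simp) (by simp)
      (by simp) (by simp) (by simp))
  have hEH3 := hEH (Finset.range n) ∅ ∅ (Finset.range n) (Finset.range n) ∅
    (horn_tuple n (Or.inr rfl) (Or.inl rfl) (Or.inl rfl) (Or.inr rfl)
      (Or.inr rfl) (Or.inl rfl) (by simp) (by simp) (by simp)
      (by simp) (by simp) (by simp))
  simp only [Finset.sum_empty] at hEH1 hEH2 hEH3
  push_cast [← Nat.cast_sum] at hEH1 hEH2 hEH3
  omega
end

section
/- Let μ, ν, λ ∈ Par_n with N_{μ,ν,λ} > 0. Then for all disjoint subsets X, Y ⊆ [n], the subset-sum inequality 0 ≤ Σ_{i∈X} μ_i + Σ_{i∈Y} ν_i − Σ_{i∈Y} μ_i − Σ_{i∈X} ν_i + Σ_{i=1}^{|X|+|Y|} λ_i holds. -/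
/-!
A positive `N_{μ,ν,λ}` provides partitions `α, β, γ` and Littlewood–Richardson tableaux of shapes
`μ/α`, `ν/α`, `λ/β` with contents `β`, `γ`, `γ`. Every such tableau of shape `λ/μ` and content
`ν` satisfies two counting inequalities: for a set `X` of `k` rows,
`∑_{i∈X} λ_i ≤ ∑_{i∈X} μ_i + ν_1 + ⋯ + ν_k`, and
`μ_1 + ⋯ + μ_x + ν_1 + ⋯ + ν_y ≤ λ_1 + ⋯ + λ_{x+y}`.
The first, for `μ/α` on the rows `Y` and for `ν/α` on the rows `X`, and the second, for `λ/β`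
with `x = |Y|` and `y = |X|`, add up to the claim once `α ⊆ μ` and `α ⊆ ν` are used.

The first inequality is an injection of the cells in the rows `X` into the cells with the `k`
smallest letters: the lattice condition matches the letters `t + 1` injectively with earlier
letters `t`, which sit in higher rows, and a cell is lowered this way until its letter is at
most the number of rows of `X` above it. For the second, the cells with the `y` smallest letters
in the first `x + y` rows lie in `λ/μ`, and by column strictness the remaining ones fit into the
cells of `μ` in the rows `x + 1, …, x + y`.
-/

open Finset

theorem Finset.exists_injOn_lt_of_card_filter_le {α : Type*} [LinearOrder α]
    (A B : Finset α) (h : ∀ b ∈ B, #{b' ∈ B | b' ≤ b} ≤ #{a ∈ A | a < b}) :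
    ∃ f : α → α, (∀ b ∈ B, f b ∈ A ∧ f b < b) ∧ Set.InjOn f B := by
  induction B using Finset.induction_on_max with
  | empty => exact ⟨id, by simp, by simp⟩
  | insert b B hlt ih =>
    have hb : b ∉ B := fun hb => (hlt b hb).false
    obtain ⟨f, hfA, hfinj⟩ := ih fun b' hb' => by
      have := h b' (mem_insert_of_mem hb')
      rwa [filter_insert, if_neg (hlt b' hb').not_ge] at this
    have hcard : #(B.image f) < #{a ∈ A | a < b} := by
      have := h b (mem_insert_self b B)
      rw [filter_insert, if_pos le_rfl, filter_true_of_mem fun x hx => (hlt x hx).le,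
        card_insert_of_notMem hb] at this
      exact card_image_le.trans_lt this
    obtain ⟨a, ha, haf⟩ := exists_mem_notMem_of_card_lt_card hcard
    rw [mem_filter] at ha
    refine ⟨Function.update f b a, ?_, ?_⟩
    · intro x hx
      rcases mem_insert.1 hx with rfl | hx
      · simpa using ha
      · rw [Function.update_of_ne (hlt x hx).ne]
        exact hfA x hx
    · rw [coe_insert, Set.injOn_insert (by simpa using hb)]
      refine ⟨fun x hx y hy hxy => hfinj hx hy ?_, ?_⟩
      · rwa [Function.update_of_ne (hlt x hx).ne, Function.update_of_ne (hlt y hy).ne] at hxy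
      · rintro ⟨x, hx, hxa⟩
        rw [Function.update_self, Function.update_of_ne (hlt x hx).ne] at hxa
        exact haf (mem_image.2 ⟨x, hx, hxa⟩)

/-- The order of the reverse reading word: rows top to bottom, each row right to left. -/
def readingKey : ℕ × ℕ ≃ ℕ ×ₗ ℕᵒᵈ :=
  (Equiv.prodCongr (Equiv.refl ℕ) OrderDual.toDual).trans toLex

lemma readingKey_le_readingKey {p q : ℕ × ℕ} :
    readingKey p ≤ readingKey q ↔ p.1 < q.1 ∨ p.1 = q.1 ∧ q.2 ≤ p.2 :=
  Prod.Lex.toLex_le_toLex (x := (p.1, OrderDual.toDual p.2)) (y := (q.1, OrderDual.toDual q.2))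

lemma readingKey_lt_readingKey {p q : ℕ × ℕ} :
    readingKey p < readingKey q ↔ p.1 < q.1 ∨ p.1 = q.1 ∧ q.2 < p.2 :=
  Prod.Lex.toLex_lt_toLex (x := (p.1, OrderDual.toDual p.2)) (y := (q.1, OrderDual.toDual q.2))

lemma Set.Finite.ncard_sep_eq_card_filter {α : Type*} {s : Set α} (hs : s.Finite)
    (P : α → Prop) [DecidablePred P] : {a ∈ s | P a}.ncard = #{a ∈ hs.toFinset | P a} := by
  rw [← Set.ncard_coe_finset]
  congr 1
  ext
  simp

namespace IsPartitionN

variable {n : ℕ} {lam : ℕ → ℕ}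

lemma finite_skewCells (h : IsPartitionN n lam) (mu : ℕ → ℕ) : (skewCells lam mu).Finite := by
  refine ((Set.finite_Iio n).prod (Set.finite_Iio (lam 0))).subset fun p hp => ⟨?_, ?_⟩
  · by_contra hn
    have := h.2 p.1 (not_lt.1 hn)
    exact absurd hp.2 (by omega)
  · exact hp.2.trans_le (h.1 (Nat.zero_le _))

lemma exists_lt_iff_lt_conj (h : IsPartitionN n lam) :
    ∃ conj : ℕ → ℕ, ∀ r c, c < lam r ↔ r < conj c := by
  have hex : ∀ c, ∃ r, lam r ≤ c := fun c => ⟨n, by rw [h.2 n le_rfl]; exact Nat.zero_le c⟩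
  refine ⟨fun c => Nat.find (hex c), fun r c => ?_⟩
  rw [Nat.lt_find_iff, ← not_le]
  exact ⟨fun hr m hm hm' => hr ((h.1 hm).trans hm'), fun hr => hr r le_rfl⟩

end IsPartitionN

lemma card_filter_skewCells_fst_mem {lam mu : ℕ → ℕ} (hfin : (skewCells lam mu).Finite)
    (X : Finset ℕ) : #{p ∈ hfin.toFinset | p.1 ∈ X} = ∑ i ∈ X, (lam i - mu i) := by
  rw [card_eq_sum_card_fiberwise (f := Prod.fst) (s := {p ∈ hfin.toFinset | p.1 ∈ X})
    (t := X) fun p hp => (mem_filter.1 hp).2]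
  refine sum_congr rfl fun i hi => ?_
  have hrow : {p ∈ {p ∈ hfin.toFinset | p.1 ∈ X} | p.1 = i} =
      (Ico (mu i) (lam i)).image (i, ·) := by
    ext ⟨r, c⟩
    simp only [mem_filter, Set.Finite.mem_toFinset, mem_image, mem_Ico, Prod.mk.injEq]
    constructor
    · rintro ⟨⟨hc, -⟩, rfl⟩
      exact ⟨c, hc, rfl, rfl⟩
    · rintro ⟨c, hc, rfl, rfl⟩
      exact ⟨⟨hc, hi⟩, rfl⟩
  rw [hrow, card_image_of_injective _ (Prod.mk_right_injective i), Nat.card_Ico]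

def IsLoweringMap (C : Finset (ℕ × ℕ)) (T : ℕ × ℕ → ℕ) (g : ℕ × ℕ → ℕ × ℕ) : Prop :=
  (∀ p ∈ C, 0 < T p → g p ∈ C ∧ T (g p) = T p - 1 ∧ (g p).1 < p.1) ∧
  ∀ p ∈ C, ∀ q ∈ C, 0 < T p → T p = T q → g p = g q → p = q

namespace IsLoweringMap

variable {C : Finset (ℕ × ℕ)} {T : ℕ × ℕ → ℕ} {g : ℕ × ℕ → ℕ × ℕ}

lemma iterate (hg : IsLoweringMap C T g) (m : ℕ) :
    ∀ p ∈ C, m ≤ T p → g^[m] p ∈ C ∧ T (g^[m] p) = T p - m ∧ (g^[m] p).1 + m ≤ p.1 := by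
  induction m with
  | zero => intro p hp _; simpa using hp
  | succ m ih =>
    intro p hp hm
    obtain ⟨hgp, hTgp, hrow⟩ := hg.1 p hp (by omega)
    obtain ⟨hmem, hT, hrow'⟩ := ih (g p) hgp (by omega)
    rw [Function.iterate_succ_apply]
    exact ⟨hmem, by omega, by omega⟩

lemma injOn_iterate (hg : IsLoweringMap C T g) (m : ℕ) :
    ∀ p ∈ C, ∀ q ∈ C, m ≤ T p → T p = T q → g^[m] p = g^[m] q → p = q := by
  induction m with
  | zero => intro p _ q _ _ _ h; simpa using h
  | succ m ih =>
    intro p hp q hq hm hpq h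
    rw [Function.iterate_succ_apply', Function.iterate_succ_apply'] at h
    obtain ⟨hp', hTp', -⟩ := hg.iterate m p hp (by omega)
    obtain ⟨hq', hTq', -⟩ := hg.iterate m q hq (by omega)
    exact ih p hp q hq (by omega) hpq (hg.2 _ hp' _ hq' (by omega) (by omega) h)

lemma iterate_sub_eq_of_iterate_eq (hg : IsLoweringMap C T g) {p q : ℕ × ℕ} (hp : p ∈ C)
    (hq : q ∈ C) {m k : ℕ} (hm : m ≤ T p) (hk : k ≤ T q) (hkm : k ≤ m)
    (h : g^[m] p = g^[k] q) : g^[m - k] p = q := by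
  obtain ⟨hr, hTr, -⟩ := hg.iterate (m - k) p hp (by omega)
  obtain ⟨-, hTm, -⟩ := hg.iterate m p hp hm
  obtain ⟨-, hTk, -⟩ := hg.iterate k q hq hk
  have hsplit : g^[m] p = g^[k] (g^[m - k] p) := by
    rw [← Function.iterate_add_apply, Nat.add_sub_cancel' hkm]
  have hTeq := congrArg T h
  exact hg.injOn_iterate k _ hr q hq (by omega) (by omega) (hsplit ▸ h)

end IsLoweringMap

namespace IsLRTableau

variable {lam mu nu : ℕ → ℕ} {T : ℕ × ℕ → ℕ}

lemma card_filter_eq (hT : IsLRTableau lam mu nu T) (hfin : (skewCells lam mu).Finite)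
    (t : ℕ) : #{p ∈ hfin.toFinset | T p = t} = nu t := by
  rw [← hfin.ncard_sep_eq_card_filter, hT.2.2.2.1 t]

lemma card_filter_lt (hT : IsLRTableau lam mu nu T) (hfin : (skewCells lam mu).Finite)
    (d : ℕ) : #{p ∈ hfin.toFinset | T p < d} = ∑ t ∈ range d, nu t := by
  rw [card_eq_sum_card_fiberwise (s := {p ∈ hfin.toFinset | T p < d}) (t := range d)
    fun p hp => mem_range.2 (mem_filter.1 hp).2]
  refine sum_congr rfl fun t ht => ?_
  rw [filter_filter, ← hT.card_filter_eq hfin t]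
  congr 1
  exact filter_congr fun p _ => ⟨fun h => h.2, fun h => ⟨h ▸ mem_range.1 ht, h⟩⟩

/-- The `j`-th letter `t + 1` of the reading word goes to the `j`-th letter `t`, which comes
earlier by the lattice condition, hence lies in a higher row since rows weakly increase. -/
lemma exists_lowering_of_entry (hT : IsLRTableau lam mu nu T)
    (hfin : (skewCells lam mu).Finite) (t : ℕ) :
    ∃ g : ℕ × ℕ → ℕ × ℕ, (∀ p ∈ hfin.toFinset, T p = t + 1 →
      g p ∈ hfin.toFinset ∧ T (g p) = t ∧ (g p).1 < p.1) ∧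
      Set.InjOn g ({p ∈ hfin.toFinset | T p = t + 1} : Finset _) := by
  set C := hfin.toFinset
  have hballot : ∀ b ∈ {p ∈ C | T p = t + 1}.map readingKey.toEmbedding,
      #{b' ∈ {p ∈ C | T p = t + 1}.map readingKey.toEmbedding | b' ≤ b} ≤
        #{a ∈ {p ∈ C | T p = t}.map readingKey.toEmbedding | a < b} := by
    simp only [mem_map, mem_filter, Equiv.coe_toEmbedding]
    rintro _ ⟨b, ⟨-, hb⟩, rfl⟩
    simp only [filter_map, card_map, filter_filter, Function.comp_apply, Equiv.coe_toEmbedding,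
      readingKey_le_readingKey, readingKey_lt_readingKey]
    have hlat := hT.2.2.2.2 b.1 b.2 t
    rw [hfin.ncard_sep_eq_card_filter, hfin.ncard_sep_eq_card_filter] at hlat
    convert hlat using 2
    refine filter_congr fun p _ => and_congr_right fun hp => or_congr_right
      (and_congr_right fun hrow => ⟨le_of_lt, fun h => h.lt_of_ne fun hcol => ?_⟩)
    have := congrArg T (Prod.ext hrow hcol.symm)
    omega
  obtain ⟨f, hfA, hfinj⟩ := exists_injOn_lt_of_card_filter_le _ _ hballot
  refine ⟨readingKey.symm ∘ f ∘ readingKey, fun p hp hTp => ?_, fun p hp q hq hpq => ?_⟩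
  · obtain ⟨hmem, hlt⟩ := hfA _ (mem_map_of_mem _ (mem_filter.2 ⟨hp, hTp⟩))
    obtain ⟨q, hq, hqp⟩ := mem_map.1 hmem
    simp only [Equiv.coe_toEmbedding] at hqp hlt
    simp only [Function.comp_apply, ← hqp, Equiv.symm_apply_apply]
    rw [mem_filter] at hq
    refine ⟨hq.1, hq.2, ?_⟩
    rw [← hqp, readingKey_lt_readingKey] at hlt
    refine hlt.resolve_right fun ⟨hrow, hcol⟩ => ?_
    have hpc := (Set.Finite.mem_toFinset hfin).1 hp
    have hqc := (Set.Finite.mem_toFinset hfin).1 hq.1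
    have := hT.2.1 p.1 p.2 q.2 hpc.1 hcol.le (hrow ▸ hqc.2)
    rw [Prod.mk.eta, ← hrow, Prod.mk.eta] at this
    omega
  · exact readingKey.injective (hfinj (mem_map_of_mem _ hp) (mem_map_of_mem _ hq)
      (readingKey.symm.injective hpq))

lemma exists_isLoweringMap (hT : IsLRTableau lam mu nu T) (hfin : (skewCells lam mu).Finite) :
    ∃ g, IsLoweringMap hfin.toFinset T g := by
  choose G hGmaps hGinj using hT.exists_lowering_of_entry hfin
  refine ⟨fun p => G (T p - 1) p, fun p hp hTp => ?_, fun p hp q hq hTp hpq h => ?_⟩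
  · obtain ⟨hmem, hT', hrow⟩ := hGmaps (T p - 1) p hp (by omega)
    exact ⟨hmem, by omega, hrow⟩
  · simp only [← hpq] at h
    exact hGinj (T p - 1) (mem_filter.2 ⟨hp, by omega⟩) (mem_filter.2 ⟨hq, by omega⟩) h

/-- A cell with `k` rows of `X` above it is lowered to the letter `k` (or left alone if its
letter is smaller). Two cells lowered to the same cell with different numbers of steps lie in
different rows, and the lower one, having more rows of `X` above it, ends at a larger letter. -/
theorem sum_le_sum_add_sum_range_card (hT : IsLRTableau lam mu nu T)
    (hfin : (skewCells lam mu).Finite) (X : Finset ℕ) :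
    ∑ i ∈ X, lam i ≤ ∑ i ∈ X, mu i + ∑ t ∈ range #X, nu t := by
  obtain ⟨g, hg⟩ := hT.exists_isLoweringMap hfin
  set C := hfin.toFinset
  set rank : ℕ → ℕ := fun i => #{j ∈ X | j < i}
  have rank_lt_card : ∀ i ∈ X, rank i < #X := fun i hi =>
    card_lt_card (filter_ssubset.2 ⟨i, hi, lt_irrefl i⟩)
  have rank_lt_rank : ∀ i ∈ X, ∀ j, i < j → rank i < rank j := by
    refine fun i hi j hij => card_lt_card ((ssubset_iff_of_subset fun x hx => ?_).2
      ⟨i, mem_filter.2 ⟨hi, hij⟩, fun h => (mem_filter.1 h).2.false⟩)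
    rw [mem_filter] at hx ⊢
    exact ⟨hx.1, hx.2.trans hij⟩
  clear_value rank
  have hmaps : ∀ p ∈ {p ∈ C | p.1 ∈ X}, g^[T p - rank p.1] p ∈ {p ∈ C | T p < #X} := by
    intro p hp
    rw [mem_filter] at hp ⊢
    obtain ⟨hmem, hTmem, -⟩ := hg.iterate (T p - rank p.1) p hp.1 (Nat.sub_le _ _)
    have := rank_lt_card p.1 hp.2
    exact ⟨hmem, by omega⟩
  have hinj_of_le : ∀ p ∈ {p ∈ C | p.1 ∈ X}, ∀ q ∈ {p ∈ C | p.1 ∈ X},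
      T q - rank q.1 ≤ T p - rank p.1 →
        g^[T p - rank p.1] p = g^[T q - rank q.1] q → p = q := by
    intro p hp q hq hle hpq
    rw [mem_filter] at hp hq
    have hqp :=
      hg.iterate_sub_eq_of_iterate_eq hp.1 hq.1 (Nat.sub_le _ _) (Nat.sub_le _ _) hle hpq
    rcases hle.eq_or_lt with heq | hlt
    · rwa [← heq, Nat.sub_self, Function.iterate_zero_apply] at hqp
    obtain ⟨-, -, hrow⟩ := hg.iterate (T p - rank p.1 - (T q - rank q.1)) p hp.1 (by omega)
    rw [hqp] at hrow
    have hrank := rank_lt_rank q.1 hq.2 p.1 (by omega)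
    have hTeq := congrArg T hpq
    obtain ⟨-, hTp, -⟩ := hg.iterate (T p - rank p.1) p hp.1 (Nat.sub_le _ _)
    obtain ⟨-, hTq, -⟩ := hg.iterate (T q - rank q.1) q hq.1 (Nat.sub_le _ _)
    omega
  have hinj : Set.InjOn (fun p => g^[T p - rank p.1] p) ({p ∈ C | p.1 ∈ X} : Finset _) :=
    fun p hp q hq hpq => (le_total (T q - rank q.1) (T p - rank p.1)).elim
      (hinj_of_le p hp q hq · hpq)
      fun hle => (hinj_of_le q hq p hp hle hpq.symm).symm
  calc ∑ i ∈ X, lam i ≤ ∑ i ∈ X, mu i + ∑ i ∈ X, (lam i - mu i) := by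
        rw [← sum_add_distrib]
        exact sum_le_sum fun i _ => by omega
    _ = ∑ i ∈ X, mu i + #{p ∈ C | p.1 ∈ X} := by rw [card_filter_skewCells_fst_mem]
    _ ≤ ∑ i ∈ X, mu i + #{p ∈ C | T p < #X} :=
        Nat.add_le_add_left (card_le_card_of_injOn _ hmaps hinj) _
    _ = ∑ i ∈ X, mu i + ∑ t ∈ range #X, nu t := by rw [hT.card_filter_lt]

lemma le_apply_of_apply_sub_le (hT : IsLRTableau lam mu nu T) (hlam : Antitone lam)
    (hmu : Antitone mu) (k : ℕ) :
    ∀ i c, k ≤ i → (i, c) ∈ skewCells lam mu → mu (i - k) ≤ c → k ≤ T (i, c) := by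
  induction k with
  | zero => exact fun _ _ _ _ _ => Nat.zero_le _
  | succ k ih =>
    intro i c hk hcell hmuc
    obtain ⟨i, rfl⟩ : ∃ i', i = i' + 1 := ⟨i - 1, by omega⟩
    have hcell' : (i, c) ∈ skewCells lam mu :=
      ⟨(hmu (by omega)).trans hmuc, hcell.2.trans_le (hlam (Nat.le_succ i))⟩
    have hcol := hT.2.2.1 i c hcell' hcell
    have := ih i c (by omega) hcell' (by rwa [show i - k = i + 1 - (k + 1) by omega])
    omega

/-- By column strictness a letter `< y` in column `c` lies above row `conj c + y`, where `conj c`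
is the first row of that column outside `mu`. Moving the cells of the column in the rows from
`M = max (x + y) (conj c)` on up to the rows from `x` on therefore puts them into `mu` and into
the rows `x, …, x + y - 1`. -/
lemma card_filter_lt_and_le_fst_le_sum_Ico {N : ℕ} (hT : IsLRTableau lam mu nu T)
    (hlam : IsPartitionN N lam) (hmu : Antitone mu) (x y : ℕ) :
    #{p ∈ (hlam.finite_skewCells mu).toFinset | T p < y ∧ x + y ≤ p.1} ≤
      ∑ i ∈ Ico x (x + y), mu i := by
  have hmuN : IsPartitionN N mu :=
    ⟨hmu, fun i hi => Nat.eq_zero_of_le_zero (hlam.2 i hi ▸ hT.1 i)⟩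
  obtain ⟨conj, hconj⟩ := hmuN.exists_lt_iff_lt_conj
  have hF := card_filter_skewCells_fst_mem (hmuN.finite_skewCells 0) (Ico x (x + y))
  simp only [Pi.zero_apply, Nat.sub_zero] at hF
  rw [← hF]
  refine card_le_card_of_injOn (fun p => (p.1 + x - max (x + y) (conj p.2), p.2)) ?_ ?_
  · intro p hp
    simp only [coe_filter, Set.mem_ofPred_eq, Set.Finite.mem_toFinset] at hp
    obtain ⟨⟨hmuc, hclam⟩, hTy, hrow⟩ := hp
    have hconj_le : conj p.2 ≤ p.1 := not_lt.1 fun h => ((hconj _ _).2 h).not_ge hmuc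
    have hlt_conj : p.1 < conj p.2 + y := by
      by_contra hge
      have := hT.le_apply_of_apply_sub_le hlam.1 hmu y p.1 p.2 (by omega) ⟨hmuc, hclam⟩
        (not_lt.1 fun h => by have := (hconj _ _).1 h; omega)
      rw [Prod.mk.eta] at this
      omega
    simp only [coe_filter, Set.mem_ofPred_eq, Set.Finite.mem_toFinset, mem_Ico]
    obtain ⟨M, hM₁, hM₂, hM⟩ : ∃ M, x + y ≤ M ∧ conj p.2 ≤ M ∧ max (x + y) (conj p.2) = M :=
      ⟨_, le_max_left _ _, le_max_right _ _, rfl⟩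
    rw [hM]
    have hrow_lt : p.1 + x - M < conj p.2 := by omega
    exact ⟨⟨Nat.zero_le _, (hconj _ _).2 hrow_lt⟩, by omega, by omega⟩
  · intro p hp q hq hpq
    simp only [coe_filter, Set.mem_ofPred_eq, Set.Finite.mem_toFinset] at hp hq
    simp only [Prod.mk.injEq] at hpq
    obtain ⟨hrow, hcol⟩ := hpq
    rw [hcol] at hrow
    have hp' : conj q.2 ≤ p.1 := not_lt.1 fun h => ((hconj _ _).2 h).not_ge (hcol ▸ hp.1.1)
    have hq' : conj q.2 ≤ q.1 := not_lt.1 fun h => ((hconj _ _).2 h).not_ge hq.1.1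
    obtain ⟨M, hM₁, hM₂, hM⟩ : ∃ M, x + y ≤ M ∧ conj q.2 ≤ M ∧ max (x + y) (conj q.2) = M :=
      ⟨_, le_max_left _ _, le_max_right _ _, rfl⟩
    rw [hM] at hrow
    exact Prod.ext (by omega) hcol

theorem sum_range_add_sum_range_le {N : ℕ} (hT : IsLRTableau lam mu nu T)
    (hlam : IsPartitionN N lam) (hmu : Antitone mu) (x y : ℕ) :
    ∑ i ∈ range x, mu i + ∑ t ∈ range y, nu t ≤ ∑ i ∈ range (x + y), lam i := by
  have hlow := hT.card_filter_lt_and_le_fst_le_sum_Ico hlam hmu x y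
  set C := (hlam.finite_skewCells mu).toFinset
  have hsplit : #{p ∈ C | T p < y} ≤
      #{p ∈ C | p.1 ∈ range (x + y)} + #{p ∈ C | T p < y ∧ x + y ≤ p.1} := by
    refine (card_le_card fun p hp => ?_).trans (card_union_le _ _)
    rw [mem_filter] at hp
    rcases lt_or_ge p.1 (x + y) with h | h
    · exact mem_union_left _ (mem_filter.2 ⟨hp.1, mem_range.2 h⟩)
    · exact mem_union_right _ (mem_filter.2 ⟨hp.1, hp.2, h⟩)
  have hlam_eq : ∑ i ∈ range (x + y), lam i =
      ∑ i ∈ range (x + y), (lam i - mu i) + ∑ i ∈ range (x + y), mu i := by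
    rw [← sum_add_distrib]
    exact sum_congr rfl fun i _ => (Nat.sub_add_cancel (hT.1 i)).symm
  rw [← sum_range_add_sum_Ico mu (Nat.le_add_right x y)] at hlam_eq
  rw [card_filter_skewCells_fst_mem, hT.card_filter_lt] at hsplit
  omega

end IsLRTableau

theorem subset_sum_of_nlNumber_pos_general (n : ℕ) (μ ν lam : ℕ → ℕ)
    (hμ : IsPartitionN n μ) (hν : IsPartitionN n ν) (hlam : IsPartitionN n lam)
    (hN : 0 < nlNumber μ ν lam)
    (X Y : Finset ℕ) :
    (0 : ℤ) ≤ (∑ i ∈ X, (μ i : ℤ)) + (∑ i ∈ Y, (ν i : ℤ)) -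
      (∑ i ∈ Y, (μ i : ℤ)) - (∑ i ∈ X, (ν i : ℤ)) +
      ∑ i ∈ Finset.range (X.card + Y.card), (lam i : ℤ) := by
  obtain ⟨⟨⟨α, β, γ⟩, T₁, T₂, T₃⟩, -, hβ, -, ⟨h₁, -⟩, ⟨h₂, -⟩, ⟨h₃, -⟩⟩ :=
    Set.nonempty_of_ncard_ne_zero hN.ne'
  dsimp only at hβ h₁ h₂ h₃
  have hY := h₁.sum_le_sum_add_sum_range_card (hμ.finite_skewCells α) Y
  have hX := h₂.sum_le_sum_add_sum_range_card (hν.finite_skewCells α) X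
  have hpack := h₃.sum_range_add_sum_range_le hlam hβ #Y #X
  have hαν : ∑ i ∈ Y, α i ≤ ∑ i ∈ Y, ν i := sum_le_sum fun i _ => h₂.1 i
  have hαμ : ∑ i ∈ X, α i ≤ ∑ i ∈ X, μ i := sum_le_sum fun i _ => h₁.1 i
  rw [add_comm #Y] at hpack
  have key : ∑ i ∈ Y, μ i + ∑ i ∈ X, ν i ≤
      ∑ i ∈ Y, ν i + ∑ i ∈ X, μ i + ∑ i ∈ range (#X + #Y), lam i := by
    omega
  have := (Nat.cast_le (α := ℤ)).2 key
  push_cast at this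
  linarith

/-- If `N_{μ,ν,λ} > 0` then the subset-sum inequalities hold: for disjoint
`X, Y ⊆ [n]`,
`0 ≤ ∑_{i∈X} μ_i + ∑_{i∈Y} ν_i − ∑_{i∈Y} μ_i − ∑_{i∈X} ν_i + ∑_{i=1}^{|X|+|Y|} λ_i`. -/
theorem subset_sum_of_nlNumber_pos (n : ℕ) (μ ν lam : ℕ → ℕ)
    (hμ : IsPartitionN n μ) (hν : IsPartitionN n ν) (hlam : IsPartitionN n lam)
    (hN : 0 < nlNumber μ ν lam)
    (X Y : Finset ℕ) (hX : X ⊆ Finset.range n) (hY : Y ⊆ Finset.range n)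
    (hXY : Disjoint X Y) :
    (0 : ℤ) ≤ (∑ i ∈ X, (μ i : ℤ)) + (∑ i ∈ Y, (ν i : ℤ)) -
      (∑ i ∈ Y, (μ i : ℤ)) - (∑ i ∈ X, (ν i : ℤ)) +
      ∑ i ∈ Finset.range (X.card + Y.card), (lam i : ℤ) :=
  subset_sum_of_nlNumber_pos_general n μ ν lam hμ hν hlam hN X Y
end

section
/- Let μ, ν, λ ∈ Par_n with N_{μ,ν,λ} > 0. Then |μ ∧ ν| ≥ (|μ| + |ν| − |λ|)/2. -/
/-!
Each Littlewood–Richardson tableau of shape `λ/μ` and content `ν` forces `|λ| = |μ| + |ν|`, since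
its cells are counted once by rows and once by letters. A triple `(α, β, γ)` contributing to
`N_{μ,ν,λ}` therefore gives `|μ| = |α| + |β|`, `|ν| = |α| + |γ|` and `|λ| = |β| + |γ|`, so
`|μ| + |ν| - |λ| = 2|α|`; and `α ⊆ μ`, `α ⊆ ν` give `α ⊆ μ ∧ ν`.
-/

open Finset

theorem Set.ncard_eq_finsum_ncard_fiber {α β : Type*} {s : Set α} (hs : s.Finite) (f : α → β) :
    s.ncard = ∑ᶠ b, {a ∈ s | f a = b}.ncard := by
  classical
  obtain ⟨t, rfl⟩ := hs.exists_finset_coe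
  have hfiber : ∀ b, {a ∈ (t : Set α) | f a = b}.ncard = (t.filter (f · = b)).card := by
    intro b
    rw [← Set.ncard_coe_finset, Finset.coe_filter]
    rfl
  simp only [hfiber, Set.ncard_coe_finset]
  rw [finsum_eq_sum_of_support_subset (s := t.image f), card_eq_sum_card_image f t]
  intro b hb
  obtain ⟨a, ha⟩ := Finset.card_pos.mp (Nat.pos_of_ne_zero hb)
  obtain ⟨hat, rfl⟩ := Finset.mem_filter.mp ha
  exact Finset.mem_coe.mpr (Finset.mem_image_of_mem f hat)

theorem finsum_eq_sum_range_of_eq_zero {M : Type*} [AddCommMonoid M] {n : ℕ} {f : ℕ → M}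
    (hf : ∀ i, n ≤ i → f i = 0) : ∑ᶠ i, f i = ∑ i ∈ range n, f i :=
  finsum_eq_sum_of_support_subset f fun i hi =>
    mem_coe.mpr (mem_range.mpr (not_le.mp fun hni => hi (hf i hni)))

section Shapes

variable {n : ℕ} {lam mu : ℕ → ℕ}

theorem skewCells_eq_biUnion (hlam : ∀ i, n ≤ i → lam i = 0) :
    skewCells lam mu = ↑((range n).biUnion fun i => {i} ×ˢ Ico (mu i) (lam i)) := by
  ext ⟨i, j⟩
  simp only [skewCells, Set.mem_ofPred_eq, coe_biUnion, mem_coe, mem_range, mem_product,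
    mem_singleton, mem_Ico, Set.mem_iUnion, exists_prop]
  constructor
  · rintro ⟨hmu, hlt⟩
    refine ⟨i, ?_, rfl, hmu, hlt⟩
    by_contra! hi
    rw [hlam i hi] at hlt
    omega
  · rintro ⟨i, -, rfl, h⟩
    exact h

theorem finite_skewCells (hlam : ∀ i, n ≤ i → lam i = 0) : (skewCells lam mu).Finite :=
  skewCells_eq_biUnion hlam ▸ Finset.finite_toSet _

theorem sum_add_ncard_skewCells (hmu : ∀ i, mu i ≤ lam i) (hlam : ∀ i, n ≤ i → lam i = 0) :
    ∑ i ∈ range n, mu i + (skewCells lam mu).ncard = ∑ i ∈ range n, lam i := by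
  rw [skewCells_eq_biUnion hlam, Set.ncard_coe_finset, card_biUnion]
  · simp only [card_product, card_singleton, Nat.card_Ico, one_mul, ← sum_add_distrib]
    exact sum_congr rfl fun i _ => Nat.add_sub_of_le (hmu i)
  · intro i _ j _ hij
    exact disjoint_product.mpr (Or.inl (disjoint_singleton.mpr hij))

end Shapes

theorem IsLRTableau.sum_range_eq {n : ℕ} {lam mu nu : ℕ → ℕ} {T : ℕ × ℕ → ℕ}
    (hT : IsLRTableau lam mu nu T) (hlam : ∀ i, n ≤ i → lam i = 0) :
    ∑ i ∈ range n, lam i = ∑ i ∈ range n, mu i + ∑ᶠ t, nu t := by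
  rw [← sum_add_ncard_skewCells hT.1 hlam,
    Set.ncard_eq_finsum_ncard_fiber (finite_skewCells hlam) T]
  simp only [hT.2.2.2.1]

/-- If `N_{μ,ν,λ} > 0` then `|μ ∧ ν| ≥ (|μ| + |ν| − |λ|) / 2` (stated as
`|μ| + |ν| − |λ| ≤ 2 |μ ∧ ν|`, where `(μ ∧ ν)_i = min (μ_i, ν_i)`). -/
theorem wedge_of_nlNumber_pos (n : ℕ) (μ ν lam : ℕ → ℕ)
    (hμ : IsPartitionN n μ) (hν : IsPartitionN n ν) (hlam : IsPartitionN n lam)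
    (hN : 0 < nlNumber μ ν lam) :
    (∑ i ∈ Finset.range n, (μ i : ℤ)) + (∑ i ∈ Finset.range n, (ν i : ℤ)) -
      (∑ i ∈ Finset.range n, (lam i : ℤ)) ≤
      2 * ∑ i ∈ Finset.range n, (min (μ i) (ν i) : ℤ) := by
  obtain ⟨⟨⟨α, β, γ⟩, T₁, T₂, T₃⟩, -, -, -, ⟨h₁, -⟩, ⟨h₂, -⟩, ⟨h₃, -⟩⟩ :=
    Set.nonempty_of_ncard_ne_zero hN.ne'
  dsimp only at h₁ h₂ h₃
  have hμ_eq := h₁.sum_range_eq hμ.2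
  have hν_eq := h₂.sum_range_eq hν.2
  have hlam_eq := h₃.sum_range_eq hlam.2
  have hβ : ∑ᶠ t, β t = ∑ t ∈ range n, β t :=
    finsum_eq_sum_range_of_eq_zero fun t ht => Nat.le_zero.mp (hlam.2 t ht ▸ h₃.1 t)
  have hα : ∑ i ∈ range n, α i ≤ ∑ i ∈ range n, min (μ i) (ν i) :=
    sum_le_sum fun i _ => le_min (h₁.1 i) (h₂.1 i)
  rw [hβ] at hμ_eq
  simp only [← Nat.cast_min, ← Nat.cast_sum]
  omega
end
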